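/- (Direct implication of the first identification condition.) Let Z ∈ ℝ^{n×n} and U, V ∈ ℝ^{n×r} with UᵀU = VᵀV = I_r. Suppose ‖ZV‖_F² + ‖ZᵀU‖_F² ≤ (1 − η)‖Z‖_F² for some 0 < η ≤ 1. Let P_{T⊥}(Z) := (I − UUᵀ)Z(I − VVᵀ). Then ‖UᵀZV‖_F² ≤ ‖P_{T⊥}(Z)‖_F² − η‖Z‖_F². Consequently, ‖P_{T⊥}(Z)‖_F² ≥ η‖Z‖_F² and ‖UᵀZV‖_F ≤ (1 − η/2)‖P_{T⊥}(Z)‖_F. -/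

import Mathlib

/-! With `P = UUᵀ` and `Q = VVᵀ` orthogonal projections, Pythagoras splits `‖Z‖²` into the four
blocks `‖PZQ‖²`, `‖PZ(1-Q)‖²`, `‖(1-P)ZQ‖²`, `‖(1-P)Z(1-Q)‖²`. Now `‖ZV‖²` and `‖ZᵀU‖²` are two
blocks each, sharing `‖PZQ‖² = ‖UᵀZV‖²`, so
`‖ZV‖² + ‖ZᵀU‖² = ‖Z‖² - ‖P_{T⊥}(Z)‖² + ‖UᵀZV‖²`, and the hypothesis is the first claim.
The others follow from `‖P_{T⊥}(Z)‖ ≤ ‖Z‖` and `1 - η ≤ (1 - η/2)²`. -/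

noncomputable section
open Matrix MeasureTheory

namespace Paper

/-- Frobenius (trace) inner product `⟨A,B⟩ = tr(Aᵀ B)`. -/
def finner {m k : Type*} [Fintype m] [Fintype k] (A B : Matrix m k ℝ) : ℝ :=
  Matrix.trace (Aᵀ * B)

/-- Frobenius norm `‖A‖_F`. -/
def fnorm {m k : Type*} [Fintype m] [Fintype k] (A : Matrix m k ℝ) : ℝ :=
  Real.sqrt (finner A A)

/-- Entrywise max norm `‖A‖_∞`. -/
def infNorm {m k : Type*} [Fintype m] [Fintype k] (A : Matrix m k ℝ) : ℝ :=
  ⨆ i, ⨆ j, |A i j|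

/-- Maximum row ℓ₂-norm `‖A‖_{2,∞}`. -/
def rowNorm {m k : Type*} [Fintype m] [Fintype k] (A : Matrix m k ℝ) : ℝ :=
  ⨆ i, Real.sqrt (∑ j, A i j ^ 2)

/-- The (unordered) singular values of a real matrix: the square roots of the
eigenvalues of `Aᴴ * A`. -/
def svals {m k : Type*} [Fintype m] [Fintype k] [DecidableEq k] (A : Matrix m k ℝ) : k → ℝ :=
  fun j => Real.sqrt ((Matrix.isHermitian_conjTranspose_mul_self A).eigenvalues j)

/-- Spectral (ℓ₂ operator) norm: the largest singular value. -/
def specNorm {m k : Type*} [Fintype m] [Fintype k] [DecidableEq k] (A : Matrix m k ℝ) : ℝ :=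
  ⨆ j, svals A j

/-- Nuclear norm `‖A‖_*`: the sum of the singular values. -/
def nucNorm {m k : Type*} [Fintype m] [Fintype k] [DecidableEq k] (A : Matrix m k ℝ) : ℝ :=
  ∑ j, svals A j

/-- The `i`-th largest singular value (singular values in descending order). -/
def svalDesc {m k : ℕ} (A : Matrix (Fin m) (Fin k) ℝ) (i : Fin k) : ℝ :=
  svals A (Tuple.sort (svals A) i.rev)

/-- Projection onto the orthogonal complement of the tangent space determined by
matrices `U, V` with orthonormal columns: `P_{T⊥}(A) = (I − UUᵀ)A(I − VVᵀ)`. -/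
def PTperp {n r : Type*} [Fintype n] [Fintype r] [DecidableEq n]
    (U V : Matrix n r ℝ) (A : Matrix n n ℝ) : Matrix n n ℝ :=
  (1 - U * Uᵀ) * A * (1 - V * Vᵀ)

/-- Projection onto the tangent space: `P_T(A) = A − P_{T⊥}(A)`. -/
def PTang {n r : Type*} [Fintype n] [Fintype r] [DecidableEq n]
    (U V : Matrix n r ℝ) (A : Matrix n n ℝ) : Matrix n n ℝ :=
  A - PTperp U V A

/-- Rank-one versions of the tangent space projections, built from unit vectors. -/
def PTperpVec {n : Type*} [Fintype n] [DecidableEq n]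
    (u v : n → ℝ) (A : Matrix n n ℝ) : Matrix n n ℝ :=
  (1 - Matrix.vecMulVec u u) * A * (1 - Matrix.vecMulVec v v)

def PTangVec {n : Type*} [Fintype n] [DecidableEq n]
    (u v : n → ℝ) (A : Matrix n n ℝ) : Matrix n n ℝ :=
  A - PTperpVec u v A

/-- A `{0,1}`-valued (treatment) matrix. -/
def IsBinary {n : Type*} (Z : Matrix n n ℝ) : Prop := ∀ i j, Z i j = 0 ∨ Z i j = 1

/-- Sub-Gaussian with ψ₂-Orlicz norm at most `σ`: `E exp((X/σ)²) ≤ 2`. -/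
def SubGaussianLe {Ω : Type*} [MeasurableSpace Ω] (μ : Measure Ω) (X : Ω → ℝ) (σ : ℝ) : Prop :=
  ∫ ω, Real.exp ((X ω / σ) ^ 2) ∂μ ≤ 2

/-- A compact singular value decomposition `M = U (diag s) Vᵀ` with orthonormal columns
and strictly positive singular values. -/
def IsCompactSVD {n r : ℕ} (M : Matrix (Fin n) (Fin n) ℝ)
    (U : Matrix (Fin n) (Fin r) ℝ) (s : Fin r → ℝ) (V : Matrix (Fin n) (Fin r) ℝ) : Prop :=
  Uᵀ * U = 1 ∧ Vᵀ * V = 1 ∧ (∀ i, 0 < s i) ∧ M = U * Matrix.diagonal s * Vᵀ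

/-- Objective of the convex program `g(M, τ)`. -/
def gval {n : ℕ} (O Z : Matrix (Fin n) (Fin n) ℝ) (lam : ℝ)
    (M : Matrix (Fin n) (Fin n) ℝ) (τ : ℝ) : ℝ :=
  1 / 2 * fnorm (O - M - τ • Z) ^ 2 + lam * nucNorm M

/-- `τ(X,Y) = ⟨Z, O − XYᵀ⟩ / ‖Z‖_F²`. -/
def tauOf {n r : ℕ} (Z O : Matrix (Fin n) (Fin n) ℝ)
    (X Y : Matrix (Fin n) (Fin r) ℝ) : ℝ :=
  finner Z (O - X * Yᵀ) / fnorm Z ^ 2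

/-- `∇_X f(X,Y;τ)`. -/
def gradX {n r : ℕ} (Z O : Matrix (Fin n) (Fin n) ℝ) (lam : ℝ)
    (X Y : Matrix (Fin n) (Fin r) ℝ) (τ : ℝ) : Matrix (Fin n) (Fin r) ℝ :=
  (X * Yᵀ + τ • Z - O) * Y + lam • X

/-- `∇_Y f(X,Y;τ)`. -/
def gradY {n r : ℕ} (Z O : Matrix (Fin n) (Fin n) ℝ) (lam : ℝ)
    (X Y : Matrix (Fin n) (Fin r) ℝ) (τ : ℝ) : Matrix (Fin n) (Fin r) ℝ :=
  (X * Yᵀ + τ • Z - O)ᵀ * X + lam • Y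

/-- `∇f(X,Y;τ) ∈ ℝ^{2n×r}`: the vertical stacking of `∇_X f` and `∇_Y f`. -/
def gradf {n r : ℕ} (Z O : Matrix (Fin n) (Fin n) ℝ) (lam : ℝ)
    (X Y : Matrix (Fin n) (Fin r) ℝ) (τ : ℝ) : Matrix (Fin n ⊕ Fin n) (Fin r) ℝ :=
  Matrix.fromRows (gradX Z O lam X Y τ) (gradY Z O lam X Y τ)

/-- The non-convex objective `f(X,Y;τ)`. -/
def fval {n r : ℕ} (Z O : Matrix (Fin n) (Fin n) ℝ) (lam : ℝ)
    (X Y : Matrix (Fin n) (Fin r) ℝ) (τ : ℝ) : ℝ :=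
  1 / 2 * fnorm (O - X * Yᵀ - τ • Z) ^ 2 + lam / 2 * fnorm X ^ 2 + lam / 2 * fnorm Y ^ 2

/-- Algorithm 1 (alternating gradient descent); `τᵗ` is always `tauOf Z O Xᵗ Yᵗ`. -/
def gdIter {n r : ℕ} (Z O : Matrix (Fin n) (Fin n) ℝ) (lam η : ℝ)
    (X0 Y0 : Matrix (Fin n) (Fin r) ℝ) :
    ℕ → Matrix (Fin n) (Fin r) ℝ × Matrix (Fin n) (Fin r) ℝ
  | 0 => (X0, Y0)
  | t + 1 =>
      let p := gdIter Z O lam η X0 Y0 t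
      let τ := tauOf Z O p.1 p.2
      (p.1 - η • gradX Z O lam p.1 p.2 τ, p.2 - η • gradY Z O lam p.1 p.2 τ)

/-- Vertical stacking `F = [X; Y] ∈ ℝ^{2n×r}`. -/
def stack {n r : ℕ} (X Y : Matrix (Fin n) (Fin r) ℝ) : Matrix (Fin n ⊕ Fin n) (Fin r) ℝ :=
  Matrix.fromRows X Y

/-- `H` is an optimal rotation aligning `F` with `Fstar`:
it is orthogonal and minimizes `‖F R − Fstar‖_F` over orthogonal `R`. -/
def IsMinRot {n r : ℕ} (F Fstar : Matrix (Fin n ⊕ Fin n) (Fin r) ℝ)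
    (H : Matrix (Fin r) (Fin r) ℝ) : Prop :=
  Hᵀ * H = 1 ∧ ∀ R : Matrix (Fin r) (Fin r) ℝ, Rᵀ * R = 1 →
    fnorm (F * H - Fstar) ≤ fnorm (F * R - Fstar)

section Frobenius

variable {l m k p : Type*} [Fintype l] [Fintype m] [Fintype k] [Fintype p]

lemma finner_self_nonneg (A : Matrix m k ℝ) : 0 ≤ finner A A :=
  Finset.sum_nonneg fun _ _ => Finset.sum_nonneg fun _ _ => mul_self_nonneg _

lemma fnorm_nonneg (A : Matrix m k ℝ) : 0 ≤ fnorm A := Real.sqrt_nonneg _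

lemma fnorm_sq (A : Matrix m k ℝ) : fnorm A ^ 2 = trace (Aᵀ * A) :=
  Real.sq_sqrt (finner_self_nonneg A)

lemma fnorm_transpose (A : Matrix m k ℝ) : fnorm Aᵀ = fnorm A := by
  rw [fnorm, finner, transpose_transpose, trace_mul_comm]; rfl

lemma fnorm_mul_sq (B : Matrix l m ℝ) (A : Matrix m k ℝ) :
    fnorm (B * A) ^ 2 = trace (Aᵀ * (Bᵀ * B) * A) := by
  rw [fnorm_sq, transpose_mul]
  simp only [Matrix.mul_assoc]

lemma fnorm_mul_mul_sq (B : Matrix l m ℝ) (A : Matrix m k ℝ) (C : Matrix k p ℝ) :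
    fnorm (B * A * C) ^ 2 = trace (Aᵀ * (Bᵀ * B) * A * (C * Cᵀ)) := by
  rw [fnorm_sq, transpose_mul, transpose_mul, Matrix.mul_assoc, trace_mul_comm]
  simp only [Matrix.mul_assoc]

end Frobenius

section Projection

lemma transpose_one_sub_mul_transpose {n r : Type*} [DecidableEq n] [Fintype r]
    (U : Matrix n r ℝ) : (1 - U * Uᵀ)ᵀ = 1 - U * Uᵀ := by
  rw [transpose_sub, transpose_one, transpose_mul, transpose_transpose]

variable {n r : Type*} [Fintype n] [Fintype r] [DecidableEq n] [DecidableEq r] {U : Matrix n r ℝ}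

lemma one_sub_mul_transpose_mul_self (hU : Uᵀ * U = 1) :
    (1 - U * Uᵀ) * (1 - U * Uᵀ) = 1 - U * Uᵀ := by
  have hP : U * Uᵀ * (U * Uᵀ) = U * Uᵀ := by
    rw [Matrix.mul_assoc, ← Matrix.mul_assoc Uᵀ, hU, Matrix.one_mul]
  rw [Matrix.mul_sub, Matrix.sub_mul, Matrix.sub_mul, hP]
  simp

lemma fnorm_transpose_mul_sq_add {k : Type*} [Fintype k] (hU : Uᵀ * U = 1) (A : Matrix n k ℝ) :
    fnorm (Uᵀ * A) ^ 2 + fnorm ((1 - U * Uᵀ) * A) ^ 2 = fnorm A ^ 2 := by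
  rw [fnorm_mul_sq, fnorm_mul_sq, fnorm_sq, transpose_one_sub_mul_transpose,
    one_sub_mul_transpose_mul_self hU]
  simp [Matrix.mul_sub, Matrix.sub_mul, trace_sub]

lemma fnorm_transpose_mul_sq_le {k : Type*} [Fintype k] (hU : Uᵀ * U = 1) (A : Matrix n k ℝ) :
    fnorm (Uᵀ * A) ^ 2 ≤ fnorm A ^ 2 := by
  linarith [fnorm_transpose_mul_sq_add hU A, sq_nonneg (fnorm ((1 - U * Uᵀ) * A))]

variable {V : Matrix n r ℝ}

lemma fnorm_PTperp_sq_add (hU : Uᵀ * U = 1) (hV : Vᵀ * V = 1) (Z : Matrix n n ℝ) :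
    fnorm (PTperp U V Z) ^ 2 + fnorm (Z * V) ^ 2 + fnorm (Zᵀ * U) ^ 2
      = fnorm Z ^ 2 + fnorm (Uᵀ * Z * V) ^ 2 := by
  -- write each norm as `‖B * Z * C‖`, which `fnorm_mul_mul_sq` turns into `tr (Zᵀ X Z Y)`
  rw [← fnorm_transpose (Zᵀ * U), transpose_mul, transpose_transpose,
    ← Matrix.mul_one (Uᵀ * Z), ← Matrix.one_mul (Z * V), ← Matrix.one_mul Z,
    ← Matrix.mul_one (1 * Z), ← Matrix.mul_assoc, PTperp]
  simp only [fnorm_mul_mul_sq, transpose_one_sub_mul_transpose,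
    one_sub_mul_transpose_mul_self hU, one_sub_mul_transpose_mul_self hV, transpose_transpose]
  simp only [Matrix.one_mul, Matrix.mul_one, Matrix.mul_sub, Matrix.sub_mul, Matrix.mul_assoc,
    trace_sub, transpose_one, transpose_mul, transpose_transpose]
  ring

lemma fnorm_PTperp_sq_le (hU : Uᵀ * U = 1) (hV : Vᵀ * V = 1) (Z : Matrix n n ℝ) :
    fnorm (PTperp U V Z) ^ 2 ≤ fnorm Z ^ 2 := by
  have hUZV := fnorm_transpose_mul_sq_le hU (Z * V)
  rw [← Matrix.mul_assoc] at hUZV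
  linarith [fnorm_PTperp_sq_add hU hV Z, sq_nonneg (fnorm (Zᵀ * U))]

end Projection

/-- direct implication of the first identification condition. -/
theorem stmt14
    (n r : ℕ) (Z : Matrix (Fin n) (Fin n) ℝ)
    (U V : Matrix (Fin n) (Fin r) ℝ)
    (hU : Uᵀ * U = 1) (hV : Vᵀ * V = 1)
    (η : ℝ) (hη0 : 0 < η) (hη1 : η ≤ 1)
    (h : fnorm (Z * V) ^ 2 + fnorm (Zᵀ * U) ^ 2 ≤ (1 - η) * fnorm Z ^ 2) :
    fnorm (Uᵀ * Z * V) ^ 2 ≤ fnorm (PTperp U V Z) ^ 2 - η * fnorm Z ^ 2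
    ∧ η * fnorm Z ^ 2 ≤ fnorm (PTperp U V Z) ^ 2
    ∧ fnorm (Uᵀ * Z * V) ≤ (1 - η / 2) * fnorm (PTperp U V Z) := by
  have hcore : fnorm (Uᵀ * Z * V) ^ 2 ≤ fnorm (PTperp U V Z) ^ 2 - η * fnorm Z ^ 2 := by
    linarith [fnorm_PTperp_sq_add hU hV Z]
  refine ⟨hcore, by linarith [sq_nonneg (fnorm (Uᵀ * Z * V))], ?_⟩
  have hcontract : fnorm (Uᵀ * Z * V) ^ 2 ≤ (1 - η) * fnorm (PTperp U V Z) ^ 2 := by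
    linarith [mul_le_mul_of_nonneg_left (fnorm_PTperp_sq_le hU hV Z) hη0.le]
  have hsq : fnorm (Uᵀ * Z * V) ^ 2 ≤ ((1 - η / 2) * fnorm (PTperp U V Z)) ^ 2 := by
    nlinarith [sq_nonneg (η * fnorm (PTperp U V Z))]
  exact (pow_le_pow_iff_left₀ (fnorm_nonneg _)
    (mul_nonneg (by linarith) (fnorm_nonneg _)) two_ne_zero).1 hsq

end Paper
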